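/- arXiv:2303.05781 — 2 statements merged into one kernel-verified Lean document; each statement's English description precedes it below -/
import Mathlib

section
/- Let f be strategy-proof, i ∈ A an agent with single-peaked preferences, and R, (R'_i, R_{-i}) profiles such that the preselected set ω(p(R)) = {l, r} with l < r. If the Ω-restricted peak p(R_i) lies in (l, r), then the preselected set ω(p(R'_i, R_{-i})) has empty intersection with the open interval (l, r). -/
structure Pref (X : Set ℝ) where
  pref : ℝ → ℝ → Prop
  asymm : ∀ x y, pref x y → ¬ pref y x
  trans : ∀ x y z, pref x y → pref y z → pref x z
  total : ∀ x ∈ X, ∀ y ∈ X, x ≠ y → pref x y ∨ pref y x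

/-- Single-peaked preference over `X`. -/
def SinglePeaked {X : Set ℝ} (R : Pref X) : Prop :=
  ∃ ρ ∈ X, ∀ x ∈ X, ∀ y ∈ X, ((ρ ≤ x ∧ x < y) ∨ (y < x ∧ x ≤ ρ)) → R.pref x y

/-- Single-dipped preference over `X`. -/
def SingleDipped {X : Set ℝ} (R : Pref X) : Prop :=
  ∃ δ ∈ X, ∀ x ∈ X, ∀ y ∈ X, ((δ ≤ x ∧ x < y) ∨ (y < x ∧ x ≤ δ)) → R.pref y x

/-- Profiles in the mixed domain: agents in `A` single-peaked, the rest single-dipped. -/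
def Admissible {N : Type} (X : Set ℝ) (A : Set N) (R : N → Pref X) : Prop :=
  ∀ i, (i ∈ A → SinglePeaked (R i)) ∧ (i ∉ A → SingleDipped (R i))

/-- Range Ω of the social choice rule over admissible profiles. -/
def SCRange {N : Type} (X : Set ℝ) (A : Set N) (f : (N → Pref X) → ℝ) : Set ℝ :=
  {x | ∃ R, Admissible X A R ∧ f R = x}

/-- Strategy-proofness on the mixed domain. -/
def StrategyProof {N : Type} [DecidableEq N] (X : Set ℝ) (A : Set N)
    (f : (N → Pref X) → ℝ) : Prop :=
  ∀ R, Admissible X A R → ∀ i (R'i : Pref X),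
    Admissible X A (Function.update R i R'i) →
    ¬ (R i).pref (f (Function.update R i R'i)) (f R)

open Classical in
/-- Group strategy-proofness on the mixed domain. -/
def GroupStrategyProof {N : Type} (X : Set ℝ) (A : Set N)
    (f : (N → Pref X) → ℝ) : Prop :=
  ∀ R, Admissible X A R → ∀ (S : Set N) (R' : N → Pref X),
    Admissible X A (fun j => if j ∈ S then R' j else R j) →
    ¬ (S.Nonempty ∧ ∀ i ∈ S, (R i).pref (f (fun j => if j ∈ S then R' j else R j)) (f R))

/-- `x` is the best element of `Ω` under `R`. -/
def IsBest {X : Set ℝ} (Ω : Set ℝ) (R : Pref X) (x : ℝ) : Prop :=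
  x ∈ Ω ∧ ∀ y ∈ Ω, y ≠ x → R.pref x y

/-- `x` is the worst element of `Ω` under `R`. -/
def IsWorst {X : Set ℝ} (Ω : Set ℝ) (R : Pref X) (x : ℝ) : Prop :=
  x ∈ Ω ∧ ∀ y ∈ Ω, y ≠ x → R.pref y x

/-- `x` is agent `i`'s Ω-restricted peak (if `i ∈ A`) or dip (if `i ∉ A`) at `R`. -/
def OVal {N : Type} {X : Set ℝ} (Ω : Set ℝ) (A : Set N) (R : N → Pref X)
    (i : N) (x : ℝ) : Prop :=
  (i ∈ A ∧ IsBest Ω (R i) x) ∨ (i ∉ A ∧ IsWorst Ω (R i) x)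

/-- Two profiles have the same vector of Ω-restricted peaks and dips. -/
def SameO {N : Type} {X : Set ℝ} (Ω : Set ℝ) (A : Set N) (R R' : N → Pref X) : Prop :=
  ∀ i x, OVal Ω A R i x ↔ OVal Ω A R' i x

/-- Ω(o(R)): outcomes attainable over profiles sharing the Ω-restricted peaks/dips of `R`. -/
def OmegaO {N : Type} (X : Set ℝ) (A : Set N) (f : (N → Pref X) → ℝ)
    (R : N → Pref X) : Set ℝ :=
  {x | ∃ R', Admissible X A R' ∧ SameO (SCRange X A f) A R R' ∧ f R' = x}

/-- Two profiles have the same Ω-restricted peaks of the agents in `A`. -/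
def SameP {N : Type} {X : Set ℝ} (Ω : Set ℝ) (A : Set N) (R R' : N → Pref X) : Prop :=
  ∀ i ∈ A, ∀ x, IsBest Ω (R i) x ↔ IsBest Ω (R' i) x

/-- Ω(p(R)): outcomes attainable over profiles sharing the Ω-restricted peak vector of `R`. -/
def OmegaP {N : Type} (X : Set ℝ) (A : Set N) (f : (N → Pref X) → ℝ)
    (R : N → Pref X) : Set ℝ :=
  {x | ∃ R', Admissible X A R' ∧ SameP (SCRange X A f) A R R' ∧ f R' = x}

/-- Ω(p): outcomes attainable over profiles whose Ω-restricted peak vector is `p`. -/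
def OmegaPvec {N : Type} (X : Set ℝ) (A : Set N) (f : (N → Pref X) → ℝ)
    (p : N → ℝ) : Set ℝ :=
  {x | ∃ R, Admissible X A R ∧ (∀ i ∈ A, IsBest (SCRange X A f) (R i) (p i)) ∧ f R = x}

noncomputable def lexPref (X : Set ℝ) (u : ℝ → ℝ) : Pref X where
  pref a b := u b < u a ∨ (u a = u b ∧ a < b)
  asymm := by rintro a b (h | ⟨h, h'⟩) (g | ⟨g, g'⟩) <;> linarith
  trans := by
    rintro a b c (h | ⟨h, h'⟩) (g | ⟨g, g'⟩)
    · exact Or.inl (by linarith)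
    · exact Or.inl (by linarith)
    · exact Or.inl (by linarith)
    · exact Or.inr ⟨by linarith, by linarith⟩
  total := by
    intro a _ b _ hab
    rcases lt_trichotomy (u a) (u b) with h | h | h
    · exact Or.inr (Or.inl h)
    · rcases hab.lt_or_gt with h' | h'
      · exact Or.inl (Or.inr ⟨h, h'⟩)
      · exact Or.inr (Or.inr ⟨h.symm, h'⟩)
    · exact Or.inl (Or.inl h)

lemma lexPref_pref {X : Set ℝ} {u : ℝ → ℝ} {a b : ℝ} (h : u b < u a) :
    (lexPref X u).pref a b := Or.inl h

lemma lexPref_sp {X : Set ℝ} {u : ℝ → ℝ} {ρ : ℝ} (hρ : ρ ∈ X)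
    (h : ∀ a ∈ X, ∀ b ∈ X, ((ρ ≤ a ∧ a < b) ∨ (b < a ∧ a ≤ ρ)) → u b < u a) :
    SinglePeaked (lexPref X u) :=
  ⟨ρ, hρ, fun a ha b hb hc => Or.inl (h a ha b hb hc)⟩

lemma best_unique {X : Set ℝ} {Ω : Set ℝ} {P : Pref X} {a b : ℝ}
    (ha : IsBest Ω P a) (hb : IsBest Ω P b) : a = b := by
  by_contra h
  exact P.asymm a b (ha.2 b hb.1 (Ne.symm h)) (hb.2 a ha.1 h)

lemma key (X : Set ℝ) (l r x pi ρ0 : ℝ) (hρ0 : ρ0 ∈ X)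
    (hlx : l < x) (hxr : x < r) (hlpi : l < pi) (hpir : pi < r) :
    ∃ S : Pref X, SinglePeaked S ∧ (∀ y, y ≠ pi → S.pref pi y) ∧
      S.pref x l ∧ S.pref x r := by
  classical
  by_cases hpiX : pi ∈ X
  · by_cases hxpi : x ≤ pi
    · -- leftist utility with peak pi
      set u : ℝ → ℝ := fun a => if a ≤ pi then a - pi else l - a with hu
      refine ⟨lexPref X u, lexPref_sp hpiX ?_, fun y hy => lexPref_pref ?_,
        lexPref_pref ?_, lexPref_pref ?_⟩
      · intro a _ b _ hc
        simp only [hu]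
        rcases hc with ⟨h1, h2⟩ | ⟨h1, h2⟩ <;> split_ifs <;> linarith
      · simp only [hu]
        have hy' : y ≤ pi → y < pi := fun h => lt_of_le_of_ne h hy
        split_ifs with h1 h2 <;> first
          | linarith [hy' h1] | linarith [hy' h2] | linarith
      · simp only [hu]; split_ifs <;> linarith
      · simp only [hu]; split_ifs <;> linarith
    · -- rightist utility with peak pi
      push_neg at hxpi
      set u : ℝ → ℝ := fun a => if a < pi then a - r else pi - a with hu
      refine ⟨lexPref X u, lexPref_sp hpiX ?_, fun y hy => lexPref_pref ?_,
        lexPref_pref ?_, lexPref_pref ?_⟩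
      · intro a _ b _ hc
        simp only [hu]
        rcases hc with ⟨h1, h2⟩ | ⟨h1, h2⟩ <;> split_ifs <;> linarith
      · simp only [hu]
        have hy' : ¬ y < pi → pi < y := fun h => lt_of_le_of_ne (not_lt.mp h) (Ne.symm hy)
        split_ifs with h1 h2 <;> first
          | linarith [hy' h1] | linarith [hy' h2] | linarith
      · simp only [hu]; split_ifs <;> linarith
      · simp only [hu]; split_ifs <;> linarith
  · -- pi not in X : tent on X, overrides at pi (and at x if x ∉ X)
    set c : ℝ := if x ∈ X then x else ρ0 with hc
    have hcX : c ∈ X := by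
      simp only [hc]; split_ifs with h; exacts [h, hρ0]
    set u : ℝ → ℝ := fun a =>
      if a = pi then 1 else if a = x then (if x ∈ X then 0 else 1/2) else -|a - c| with hu
    have huX : ∀ a ∈ X, u a = -|a - c| := by
      intro a ha
      simp only [hu]
      rw [if_neg (by rintro rfl; exact hpiX ha)]
      split_ifs with h1 h2
      · subst h1; rw [hc, if_pos h2, sub_self, abs_zero, neg_zero]
      · exact absurd ha (h1 ▸ h2)
      · rfl
    have hub : ∀ a, a ≠ pi → u a ≤ 1/2 := by
      intro a ha
      simp only [hu, if_neg ha]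
      split_ifs with h1 h2 <;> [norm_num; norm_num; skip]
      have := abs_nonneg (a - c); linarith
    have hupi : u pi = 1 := by simp [hu]
    refine ⟨lexPref X u, lexPref_sp hcX ?_, fun y hy => lexPref_pref ?_,
      lexPref_pref ?_, lexPref_pref ?_⟩
    · intro a ha b hb hcond
      rw [huX a ha, huX b hb]
      have : |a - c| < |b - c| := by
        rcases hcond with ⟨h1, h2⟩ | ⟨h1, h2⟩
        · rw [abs_of_nonneg (by linarith), abs_of_nonneg (by linarith)]; linarith
        · rw [abs_of_nonpos (by linarith), abs_of_nonpos (by linarith)]; linarith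
      linarith
    · have := hub y hy; rw [hupi]; linarith
    · -- u l < u x
      have hlval : u l = -|l - c| := by
        simp only [hu]
        rw [if_neg (by intro h; exact absurd h (ne_of_lt hlpi)),
          if_neg (by intro h; exact absurd h (ne_of_lt hlx))]
      have hlc : -|l - c| ≤ 0 := by have := abs_nonneg (l - c); linarith
      by_cases hxp : x = pi
      · rw [hlval, hxp, hupi]; linarith
      · have hxval : u x = if x ∈ X then 0 else 1/2 := by
          simp [hu, hxp]
        rw [hlval, hxval]
        split_ifs with hxX
        · have hlc' : l ≠ c := by rw [hc, if_pos hxX]; exact ne_of_lt hlx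
          have : 0 < |l - c| := abs_pos.mpr (sub_ne_zero.mpr hlc')
          linarith
        · linarith
    · -- u r < u x
      have hrval : u r = -|r - c| := by
        simp only [hu]
        rw [if_neg (by intro h; exact absurd h.symm (ne_of_lt hpir)),
          if_neg (by intro h; exact absurd h.symm (ne_of_lt hxr))]
      have hrc : -|r - c| ≤ 0 := by have := abs_nonneg (r - c); linarith
      by_cases hxp : x = pi
      · rw [hrval, hxp, hupi]; linarith
      · have hxval : u x = if x ∈ X then 0 else 1/2 := by
          simp [hu, hxp]
        rw [hrval, hxval]
        split_ifs with hxX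
        · have hrc' : r ≠ c := by rw [hc, if_pos hxX]; exact (ne_of_lt hxr).symm
          have : 0 < |r - c| := abs_pos.mpr (sub_ne_zero.mpr hrc')
          linarith
        · linarith

/-- Lemma `mediopeaks`. -/
theorem stmt9 {N : Type} [Fintype N] [DecidableEq N] (X : Set ℝ) (hX : X.Countable)
    (A : Set N) (f : (N → Pref X) → ℝ) (hSP : StrategyProof X A f)
    (i : N) (hi : i ∈ A) (R : N → Pref X) (R'i : Pref X)
    (hR : Admissible X A R) (hR' : Admissible X A (Function.update R i R'i))
    (l r : ℝ) (hlr : l < r) (hO : OmegaP X A f R = {l, r})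
    (pi : ℝ) (hpi : IsBest (SCRange X A f) (R i) pi) (hmid : l < pi ∧ pi < r) :
    OmegaP X A f (Function.update R i R'i) ∩ Set.Ioo l r = ∅ := by
  classical
  rw [Set.eq_empty_iff_forall_notMem]
  rintro x ⟨⟨R'', hR''adm, hR''same, hfR''⟩, hlx, hxr⟩
  obtain ⟨ρ0, hρ0, -⟩ := (hR i).1 hi
  obtain ⟨S, hSsp, hSbest, hSxl, hSxr⟩ :=
    key X l r x pi ρ0 hρ0 hlx hxr hmid.1 hmid.2
  set U : N → Pref X := Function.update R'' i S with hU
  have hUi : U i = S := Function.update_self i S R''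
  have hUj : ∀ j, j ≠ i → U j = R'' j := fun j hj => Function.update_of_ne hj S R''
  have hUadm : Admissible X A U := by
    intro j
    constructor <;> intro hj
    · by_cases hji : j = i
      · subst hji; rw [hUi]; exact hSsp
      · rw [hUj j hji]; exact (hR''adm j).1 hj
    · by_cases hji : j = i
      · exact absurd (hji ▸ hi) hj
      · rw [hUj j hji]; exact (hR''adm j).2 hj
  have hSbest' : IsBest (SCRange X A f) S pi := ⟨hpi.1, fun y _ hy => hSbest y hy⟩
  have hSameP : SameP (SCRange X A f) A R U := by
    intro j hj z
    by_cases hji : j = i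
    · subst hji
      rw [hUi]
      constructor
      · intro h; rwa [best_unique h hpi]
      · intro h; rwa [best_unique h hSbest']
    · rw [hUj j hji]
      have h := hR''same j hj z
      rwa [Function.update_of_ne hji] at h
  have hfU : f U ∈ OmegaP X A f R := ⟨U, hUadm, hSameP, rfl⟩
  rw [hO] at hfU
  have hupd : Function.update U i (R'' i) = R'' := by
    funext j
    by_cases hji : j = i
    · subst hji; rw [Function.update_self]
    · rw [Function.update_of_ne hji, hUj j hji]
  have hsp := hSP U hUadm i (R'' i) (by rw [hupd]; exact hR''adm)
  rw [hupd, hfR'', hUi] at hsp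
  rcases hfU with h | h
  · exact hsp (by rw [h]; exact hSxl)
  · exact hsp (by rw [show f U = r from h]; exact hSxr)
end

section
/- If f is a strategy-proof rule on the mixed single-peaked/single-dipped domain whose range Ω equals the whole alternative set X, then f is Pareto efficient: there is no profile R and alternative x ∈ X with x P_i f(R) for all agents i. -/
/-! ### Auxiliary development for stmt15 -/

open Classical

noncomputable section Stmt15Aux

lemma prefExt {X : Set ℝ} (P Q : Pref X) (h : P.pref = Q.pref) : P = Q := by
  cases P; cases Q; cases h; rfl

lemma not_pref_self {X : Set ℝ} (P : Pref X) (a : ℝ) : ¬ P.pref a a :=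
  fun h => P.asymm a a h h

/-- Build a preference from a utility function, ties broken by `<`. -/
def mkPref (X : Set ℝ) (u : ℝ → ℝ) : Pref X where
  pref a b := u b < u a ∨ (u a = u b ∧ a < b)
  asymm := by
    intro a b h1 h2
    rcases h1 with h1 | ⟨h1a, h1b⟩ <;> rcases h2 with h2 | ⟨h2a, h2b⟩ <;> linarith
  trans := by
    intro a b c h1 h2
    rcases h1 with h1 | ⟨h1a, h1b⟩ <;> rcases h2 with h2 | ⟨h2a, h2b⟩
    · exact Or.inl (by linarith)
    · exact Or.inl (by linarith)
    · exact Or.inl (by linarith)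
    · exact Or.inr ⟨by linarith, by linarith⟩
  total := by
    intro a _ b _ hab
    rcases lt_trichotomy (u a) (u b) with h | h | h
    · exact Or.inr (Or.inl h)
    · rcases lt_trichotomy a b with h' | h' | h'
      · exact Or.inl (Or.inr ⟨h, h'⟩)
      · exact absurd h' hab
      · exact Or.inr (Or.inr ⟨h.symm, h'⟩)
    · exact Or.inl (Or.inl h)

lemma mkPref_pref {X : Set ℝ} {u : ℝ → ℝ} {a b : ℝ} :
    (mkPref X u).pref a b ↔ (u b < u a ∨ (u a = u b ∧ a < b)) := Iff.rfl

lemma mkPref_of_lt {X : Set ℝ} {u : ℝ → ℝ} {a b : ℝ} (h : u b < u a) :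
    (mkPref X u).pref a b := Or.inl h

lemma not_mkPref_of_lt {X : Set ℝ} {u : ℝ → ℝ} {a b : ℝ} (h : u a < u b) :
    ¬ (mkPref X u).pref a b := by
  rintro (h' | ⟨h', -⟩) <;> linarith

lemma peaked_of_mono {X : Set ℝ} (u : ℝ → ℝ) {ρ : ℝ} (hρ : ρ ∈ X)
    (hR : ∀ a b, ρ ≤ a → a < b → u b < u a)
    (hL : ∀ a b, a < b → b ≤ ρ → u a < u b) :
    SinglePeaked (mkPref X u) := by
  refine ⟨ρ, hρ, ?_⟩
  rintro a _ b _ (⟨h1, h2⟩ | ⟨h1, h2⟩)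
  · exact Or.inl (hR a b h1 h2)
  · exact Or.inl (hL b a h1 h2)

lemma dipped_of_mono {X : Set ℝ} (u : ℝ → ℝ) {δ : ℝ} (hδ : δ ∈ X)
    (hR : ∀ a b, δ ≤ a → a < b → u a < u b)
    (hL : ∀ a b, a < b → b ≤ δ → u b < u a) :
    SingleDipped (mkPref X u) := by
  refine ⟨δ, hδ, ?_⟩
  rintro a _ b _ (⟨h1, h2⟩ | ⟨h1, h2⟩)
  · exact Or.inl (hR a b h1 h2)
  · exact Or.inl (hL b a h1 h2)

/-! ### Canonical utility functions (for the case `x < y`) -/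

/-- Peaked canonical: peak at `x`, everything left of `x` below `y`. -/
def uPk (x y a : ℝ) : ℝ := if a < x then a - y else x - a

/-- Dipped canonical with dip `δ`, `x < δ < y`:
order `(-∞,x] > (x,δ) > ... ` with `y` above `(x,y]`. -/
def uD1 (x δ y a : ℝ) : ℝ :=
  if a ≤ x then 2 + (x - a)
  else if a < δ then -8 + (δ - a) / (δ - x)
  else if a = δ then -10
  else if a < y then -5 + (a - δ) / (y - δ)
  else if a = y then -4
  else -2 - Real.exp (y - a)

/-- Dipped canonical with dip `y`. -/
def uDy (x y a : ℝ) : ℝ :=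
  if a ≤ x then 2 + (x - a)
  else if a < y then (y - a) / (y - x)
  else if a = y then -1
  else -Real.exp (y - a)

/-- Dipped canonical with dip `δ > y`. -/
def uD2 (y δ a : ℝ) : ℝ :=
  if a ≤ δ then δ - a
  else (δ - y) - (δ - y) * Real.exp (δ - a)

lemma exp_lt_one_of_neg {t : ℝ} (h : t < 0) : Real.exp t < 1 := by
  have := Real.exp_lt_exp.mpr h
  simpa [Real.exp_zero] using this

/-! #### uPk lemmas -/

lemma uPk_eval1 {x y a : ℝ} (h : a < x) : uPk x y a = a - y := if_pos h
lemma uPk_eval2 {x y a : ℝ} (h : ¬ a < x) : uPk x y a = x - a := if_neg h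

lemma uPk_peaked {X : Set ℝ} {x y : ℝ} (hx : x ∈ X) (hxy : x < y) :
    SinglePeaked (mkPref X (uPk x y)) := by
  apply peaked_of_mono (uPk x y) hx
  · intro a b h1 h2
    rw [uPk_eval2 (by linarith), uPk_eval2 (by linarith)]; linarith
  · intro a b h1 h2
    rcases lt_or_eq_of_le h2 with h3 | h3
    · rw [uPk_eval1 (by linarith), uPk_eval1 h3]; linarith
    · rw [uPk_eval1 (by linarith), h3, uPk_eval2 (lt_irrefl x)]; linarith

lemma uPk_nbest {X : Set ℝ} {x y v : ℝ} (hxy : x < y) :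
    ¬ (mkPref X (uPk x y)).pref v x := by
  have hx : uPk x y x = 0 := by rw [uPk_eval2 (lt_irrefl x)]; ring
  rintro (h | ⟨h, h'⟩)
  · rw [hx] at h
    rcases lt_or_ge v x with hv | hv
    · rw [uPk_eval1 hv] at h; linarith
    · rw [uPk_eval2 (not_lt.mpr hv)] at h; linarith
  · rw [hx, uPk_eval1 h'] at h; linarith

lemma uPk_C {X : Set ℝ} {x y v : ℝ} (hxy : x < y) (h : v < x ∨ y ≤ v) :
    ¬ (mkPref X (uPk x y)).pref v y := by
  have hy : uPk x y y = x - y := uPk_eval2 (by linarith)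
  rcases h with h | h
  · rintro (h' | ⟨h', -⟩)
    · rw [hy, uPk_eval1 h] at h'; linarith
    · rw [hy, uPk_eval1 h] at h'; linarith
  · rcases eq_or_lt_of_le h with rfl | h
    · exact not_pref_self _ _
    · rintro (h' | ⟨h', -⟩)
      · rw [hy, uPk_eval2 (by linarith)] at h'; linarith
      · rw [hy, uPk_eval2 (by linarith)] at h'; linarith

/-! #### uD1 lemmas (assume `x < δ < y`) -/

section uD1
variable {x δ y a : ℝ}

lemma uD1_eval1 (h : a ≤ x) : uD1 x δ y a = 2 + (x - a) := if_pos h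

lemma uD1_eval2 (h1 : x < a) (h2 : a < δ) :
    uD1 x δ y a = -8 + (δ - a) / (δ - x) := by
  unfold uD1; rw [if_neg (by linarith), if_pos h2]

lemma uD1_eval3 (h1 : x < δ) : uD1 x δ y δ = -10 := by
  unfold uD1; rw [if_neg (by linarith), if_neg (lt_irrefl δ), if_pos rfl]

lemma uD1_eval4 (hxδ : x < δ) (h1 : δ < a) (h2 : a < y) :
    uD1 x δ y a = -5 + (a - δ) / (y - δ) := by
  unfold uD1
  rw [if_neg (by linarith), if_neg (by linarith), if_neg (by linarith), if_pos h2]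

lemma uD1_eval5 (hxδ : x < δ) (hδy : δ < y) : uD1 x δ y y = -4 := by
  unfold uD1
  rw [if_neg (by linarith), if_neg (by linarith), if_neg (by linarith),
    if_neg (lt_irrefl y), if_pos rfl]

lemma uD1_eval6 (hxδ : x < δ) (hδy : δ ≤ y) (h : y < a) :
    uD1 x δ y a = -2 - Real.exp (y - a) := by
  unfold uD1
  rw [if_neg (by linarith), if_neg (by linarith), if_neg (by linarith),
    if_neg (by linarith), if_neg (by linarith)]

lemma uD1_bound2 (h1 : x < a) (h2 : a < δ) :
    -8 < uD1 x δ y a ∧ uD1 x δ y a < -7 := by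
  rw [uD1_eval2 h1 h2]
  have hd : (0:ℝ) < δ - x := by linarith
  constructor
  · have : (0:ℝ) < (δ - a) / (δ - x) := div_pos (by linarith) hd
    linarith
  · have : (δ - a) / (δ - x) < 1 := (div_lt_one hd).mpr (by linarith)
    linarith

lemma uD1_bound4 (hxδ : x < δ) (h1 : δ < a) (h2 : a < y) :
    -5 < uD1 x δ y a ∧ uD1 x δ y a < -4 := by
  rw [uD1_eval4 hxδ h1 h2]
  have hd : (0:ℝ) < y - δ := by linarith
  constructor
  · have : (0:ℝ) < (a - δ) / (y - δ) := div_pos (by linarith) hd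
    linarith
  · have : (a - δ) / (y - δ) < 1 := (div_lt_one hd).mpr (by linarith)
    linarith

lemma uD1_bound6 (hxδ : x < δ) (hδy : δ ≤ y) (h : y < a) :
    -3 < uD1 x δ y a ∧ uD1 x δ y a < -2 := by
  rw [uD1_eval6 hxδ hδy h]
  have h1 : (0:ℝ) < Real.exp (y - a) := Real.exp_pos _
  have h2 : Real.exp (y - a) < 1 := exp_lt_one_of_neg (by linarith)
  constructor <;> linarith

lemma uD1_neg (hxδ : x < δ) (hδy : δ < y) (h : x < a) : uD1 x δ y a < -2 := by
  rcases lt_trichotomy a δ with h1 | rfl | h1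
  · have := uD1_bound2 (y := y) h h1; linarith
  · rw [uD1_eval3 hxδ]; norm_num
  · rcases lt_trichotomy a y with h2 | rfl | h2
    · have := uD1_bound4 hxδ h1 h2; linarith
    · rw [uD1_eval5 hxδ hδy]; norm_num
    · have := uD1_bound6 hxδ hδy.le h2; linarith

lemma uD1_strong (hxδ : x < δ) (hδy : δ < y) (h1 : x < a) (h2 : a < y) :
    uD1 x δ y a < -4 := by
  rcases lt_trichotomy a δ with h3 | rfl | h3
  · have := uD1_bound2 (y := y) h1 h3; linarith
  · rw [uD1_eval3 hxδ]; norm_num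
  · have := uD1_bound4 hxδ h3 h2; linarith

lemma uD1_dipped {X : Set ℝ} (hδX : δ ∈ X) (hxδ : x < δ) (hδy : δ < y) :
    SingleDipped (mkPref X (uD1 x δ y)) := by
  apply dipped_of_mono (uD1 x δ y) hδX
  · -- increasing on [δ, ∞)
    intro a b h1 h2
    rcases eq_or_lt_of_le h1 with rfl | h1
    · rw [uD1_eval3 hxδ]
      rcases lt_trichotomy b y with h3 | rfl | h3
      · have := uD1_bound4 hxδ h2 h3; linarith
      · rw [uD1_eval5 hxδ hδy]; norm_num
      · have := uD1_bound6 hxδ hδy.le h3; linarith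
    · rcases lt_trichotomy a y with h3 | rfl | h3
      · rcases lt_trichotomy b y with h4 | rfl | h4
        · rw [uD1_eval4 hxδ h1 h3, uD1_eval4 hxδ (by linarith) h4]
          have hd : (0:ℝ) < y - δ := by linarith
          have : (a - δ) / (y - δ) < (b - δ) / (y - δ) := by
            rw [div_lt_div_iff₀ hd hd]; nlinarith
          linarith
        · rw [uD1_eval5 hxδ hδy]
          have := uD1_bound4 hxδ h1 h3; linarith
        · have ha := uD1_bound4 hxδ h1 h3
          have hb := uD1_bound6 hxδ hδy.le h4; linarith
      · rw [uD1_eval5 hxδ hδy]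
        have := uD1_bound6 hxδ hδy.le h2; linarith
      · rw [uD1_eval6 hxδ hδy.le h3, uD1_eval6 hxδ hδy.le (by linarith)]
        have : Real.exp (y - b) < Real.exp (y - a) := Real.exp_lt_exp.mpr (by linarith)
        linarith
  · -- decreasing on (-∞, δ]
    intro a b h1 h2
    rcases le_or_gt b x with h3 | h3
    · rw [uD1_eval1 h3, uD1_eval1 (by linarith)]; linarith
    · rcases eq_or_lt_of_le h2 with rfl | h2
      · rw [uD1_eval3 hxδ]
        rcases le_or_gt a x with h4 | h4
        · rw [uD1_eval1 h4]; linarith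
        · have := uD1_bound2 (y := y) h4 h1; linarith
      · rcases le_or_gt a x with h4 | h4
        · rw [uD1_eval1 h4]
          have := uD1_bound2 (y := y) h3 h2; linarith
        · rw [uD1_eval2 h4 (by linarith), uD1_eval2 h3 h2]
          have hd : (0:ℝ) < δ - x := by linarith
          have : (δ - b) / (δ - x) < (δ - a) / (δ - x) := by
            rw [div_lt_div_iff₀ hd hd]; nlinarith
          linarith

lemma uD1_Px {X : Set ℝ} {v w : ℝ} (hxδ : x < δ) (hδy : δ < y)
    (hv : v ≤ x) (hw : x < w) : (mkPref X (uD1 x δ y)).pref v w := by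
  apply mkPref_of_lt
  have h1 : uD1 x δ y w < -2 := uD1_neg hxδ hδy hw
  rw [uD1_eval1 hv]; linarith

lemma uD1_Cy {X : Set ℝ} {v : ℝ} (hxδ : x < δ) (hδy : δ < y)
    (h1 : x < v) (h2 : v ≤ y) : ¬ (mkPref X (uD1 x δ y)).pref v y := by
  rcases eq_or_lt_of_le h2 with rfl | h2
  · exact not_pref_self _ _
  · apply not_mkPref_of_lt
    rw [uD1_eval5 hxδ hδy]
    exact uD1_strong hxδ hδy h1 h2

end uD1

/-! #### uDy lemmas (assume `x < y`) -/

section uDy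
variable {x y a : ℝ}

lemma uDy_eval1 (h : a ≤ x) : uDy x y a = 2 + (x - a) := if_pos h

lemma uDy_eval2 (h1 : x < a) (h2 : a < y) : uDy x y a = (y - a) / (y - x) := by
  unfold uDy; rw [if_neg (by linarith), if_pos h2]

lemma uDy_eval3 (h1 : x < y) : uDy x y y = -1 := by
  unfold uDy; rw [if_neg (by linarith), if_neg (lt_irrefl y), if_pos rfl]

lemma uDy_eval4 (hxy : x < y) (h : y < a) : uDy x y a = -Real.exp (y - a) := by
  unfold uDy
  rw [if_neg (by linarith), if_neg (by linarith), if_neg (by linarith)]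

lemma uDy_bound2 (h1 : x < a) (h2 : a < y) :
    0 < uDy x y a ∧ uDy x y a < 1 := by
  rw [uDy_eval2 h1 h2]
  have hd : (0:ℝ) < y - x := by linarith
  exact ⟨div_pos (by linarith) hd, (div_lt_one hd).mpr (by linarith)⟩

lemma uDy_bound4 (hxy : x < y) (h : y < a) :
    -1 < uDy x y a ∧ uDy x y a < 0 := by
  rw [uDy_eval4 hxy h]
  have h1 : (0:ℝ) < Real.exp (y - a) := Real.exp_pos _
  have h2 : Real.exp (y - a) < 1 := exp_lt_one_of_neg (by linarith)
  constructor <;> linarith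

lemma uDy_dipped {X : Set ℝ} (hyX : y ∈ X) (hxy : x < y) :
    SingleDipped (mkPref X (uDy x y)) := by
  apply dipped_of_mono (uDy x y) hyX
  · intro a b h1 h2
    rcases eq_or_lt_of_le h1 with rfl | h1
    · rw [uDy_eval3 hxy]
      have := uDy_bound4 hxy h2; linarith
    · rw [uDy_eval4 hxy h1, uDy_eval4 hxy (by linarith)]
      have : Real.exp (y - b) < Real.exp (y - a) := Real.exp_lt_exp.mpr (by linarith)
      linarith
  · intro a b h1 h2
    rcases le_or_gt b x with h3 | h3
    · rw [uDy_eval1 h3, uDy_eval1 (by linarith)]; linarith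
    · rcases eq_or_lt_of_le h2 with rfl | h2
      · rw [uDy_eval3 hxy]
        rcases le_or_gt a x with h4 | h4
        · rw [uDy_eval1 h4]; linarith
        · have := uDy_bound2 h4 h1; linarith
      · rcases le_or_gt a x with h4 | h4
        · rw [uDy_eval1 h4]
          have := uDy_bound2 h3 h2; linarith
        · rw [uDy_eval2 h4 (by linarith), uDy_eval2 h3 h2]
          have hd : (0:ℝ) < y - x := by linarith
          have : (y - b) / (y - x) < (y - a) / (y - x) := by
            rw [div_lt_div_iff₀ hd hd]; nlinarith
          linarith

lemma uDy_Px {X : Set ℝ} {v w : ℝ} (hxy : x < y) (hv : v ≤ x) (hw : x < w) :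
    (mkPref X (uDy x y)).pref v w := by
  apply mkPref_of_lt
  rw [uDy_eval1 hv]
  rcases lt_trichotomy w y with h1 | rfl | h1
  · have := uDy_bound2 hw h1; linarith
  · rw [uDy_eval3 hxy]; linarith
  · have := uDy_bound4 hxy h1; linarith

end uDy

/-! #### uD2 lemmas (assume `y < δ`) -/

section uD2
variable {y δ a : ℝ}

lemma uD2_eval1 (h : a ≤ δ) : uD2 y δ a = δ - a := if_pos h

lemma uD2_eval2 (h : δ < a) : uD2 y δ a = (δ - y) - (δ - y) * Real.exp (δ - a) := by
  unfold uD2; rw [if_neg (by linarith)]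

lemma uD2_bound2 (hyδ : y < δ) (h : δ < a) :
    0 < uD2 y δ a ∧ uD2 y δ a < δ - y := by
  rw [uD2_eval2 h]
  have h1 : (0:ℝ) < Real.exp (δ - a) := Real.exp_pos _
  have h2 : Real.exp (δ - a) < 1 := exp_lt_one_of_neg (by linarith)
  constructor <;> nlinarith

lemma uD2_dipped {X : Set ℝ} (hδX : δ ∈ X) (hyδ : y < δ) :
    SingleDipped (mkPref X (uD2 y δ)) := by
  apply dipped_of_mono (uD2 y δ) hδX
  · intro a b h1 h2
    rcases eq_or_lt_of_le h1 with rfl | h1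
    · rw [uD2_eval1 le_rfl]
      have := uD2_bound2 hyδ h2; linarith
    · rw [uD2_eval2 h1, uD2_eval2 (by linarith)]
      have h3 : Real.exp (δ - b) < Real.exp (δ - a) := Real.exp_lt_exp.mpr (by linarith)
      nlinarith
  · intro a b h1 h2
    rw [uD2_eval1 h2, uD2_eval1 (by linarith)]; linarith

lemma uD2_Px {X : Set ℝ} {x v w : ℝ} (hxy : x < y) (hyδ : y < δ)
    (hv : v ≤ x) (hw : x < w) : (mkPref X (uD2 y δ)).pref v w := by
  apply mkPref_of_lt
  rw [show uD2 y δ v = δ - v from uD2_eval1 (by linarith)]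
  rcases le_or_gt w δ with h1 | h1
  · rw [uD2_eval1 h1]; linarith
  · have := uD2_bound2 hyδ h1; linarith

lemma uD2_Cy {X : Set ℝ} {v : ℝ} (hyδ : y < δ) (h : y ≤ v) :
    ¬ (mkPref X (uD2 y δ)).pref v y := by
  rcases eq_or_lt_of_le h with rfl | h
  · exact not_pref_self _ _
  · apply not_mkPref_of_lt
    rw [uD2_eval1 hyδ.le]
    rcases le_or_gt v δ with h1 | h1
    · rw [uD2_eval1 h1]; linarith
    · have := uD2_bound2 hyδ h1; linarith

end uD2

end Stmt15Aux

/-! ### Monotonicity consequences of strategy-proofness -/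

section Core

variable {N : Type} [Fintype N] [DecidableEq N]
variable {X : Set ℝ} {A : Set N} {f : (N → Pref X) → ℝ}

lemma outcome_mem (hrange : SCRange X A f = X) {R : N → Pref X}
    (hR : Admissible X A R) : f R ∈ X := by
  rw [← hrange]; exact ⟨R, hR, rfl⟩

lemma mono_one (hSP : StrategyProof X A f) (hrange : SCRange X A f = X)
    {R : N → Pref X} (hR : Admissible X A R) (i : N) (P : Pref X)
    (hP : Admissible X A (Function.update R i P))
    (hc : ∀ v ∈ X, ¬ (R i).pref v (f R) → ¬ P.pref v (f R)) :
    f (Function.update R i P) = f R := by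
  have hw : f R ∈ X := outcome_mem hrange hR
  have hw' : f (Function.update R i P) ∈ X := outcome_mem hrange hP
  have h1 : ¬ (R i).pref (f (Function.update R i P)) (f R) := hSP R hR i P hP
  have h2 : ¬ P.pref (f R) (f (Function.update R i P)) := by
    have e : Function.update (Function.update R i P) i (R i) = R := by
      rw [Function.update_idem, Function.update_eq_self]
    have h3 := hSP (Function.update R i P) hP i (R i) (by rw [e]; exact hR)
    rw [e] at h3
    simpa using h3
  by_cases hne : f (Function.update R i P) = f R
  · exact hne
  · rcases P.total _ hw' _ hw hne with h | h
    · exact absurd h (hc _ hw' h1)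
    · exact absurd h h2

lemma mono_many (hSP : StrategyProof X A f) (hrange : SCRange X A f = X)
    {R : N → Pref X} (hR : Admissible X A R) (T : N → Pref X)
    (hT : Admissible X A T)
    (hc : ∀ i, ∀ v ∈ X, ¬ (R i).pref v (f R) → ¬ (T i).pref v (f R)) :
    f T = f R := by
  classical
  have key : ∀ s : Finset N, f (fun j => if j ∈ s then T j else R j) = f R := by
    intro s
    induction s using Finset.induction_on with
    | empty => simp
    | @insert i s hi ih =>
      have hadm : Admissible X A (fun j => if j ∈ s then T j else R j) := by
        intro j; by_cases hj : j ∈ s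
        · simpa [hj] using hT j
        · simpa [hj] using hR j
      have e : (fun j => if j ∈ insert i s then T j else R j)
          = Function.update (fun j => if j ∈ s then T j else R j) i (T i) := by
        funext j
        by_cases hj : j = i
        · subst hj; simp [hi]
        · simp [Function.update_of_ne hj, hj]
      have hadm' : Admissible X A
          (Function.update (fun j => if j ∈ s then T j else R j) i (T i)) := by
        rw [← e]
        intro j; by_cases hj : j ∈ insert i s
        · simpa [hj] using hT j
        · simpa [hj] using hR j
      rw [e]
      rw [mono_one hSP hrange hadm i (T i) hadm' ?_, ih]
      intro v hv hnp
      rw [ih] at hnp ⊢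
      rw [show (if i ∈ s then T i else R i) = R i from if_neg hi] at hnp
      exact hc i v hv hnp
  have e : T = fun j => if j ∈ (Finset.univ : Finset N) then T j else R j := by
    funext j; simp
  rw [e, key]

/-! ### Contour lemmas for the original preferences -/

lemma c1 {P : Pref X} (hP : SinglePeaked P) {x y : ℝ} (hx : x ∈ X) (hy : y ∈ X)
    (hxy : x < y) (hpxy : P.pref x y) :
    ∀ v ∈ X, ¬ P.pref v y → (v < x ∨ y ≤ v) := by
  intro v hv hnp
  by_contra hcon
  push_neg at hcon
  obtain ⟨hxv, hvy⟩ := hcon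
  obtain ⟨ρ, hρX, hρ⟩ := hP
  rcases eq_or_lt_of_le hxv with rfl | hxv'
  · exact hnp hpxy
  · rcases le_or_gt ρ v with h | h
    · exact hnp (hρ v hv y hy (Or.inl ⟨h, hvy⟩))
    · exact hnp (P.trans v x y (hρ v hv x hx (Or.inr ⟨hxv', h.le⟩)) hpxy)

lemma c2 {P : Pref X} {δ x y : ℝ}
    (hsp : ∀ a ∈ X, ∀ b ∈ X, ((δ ≤ a ∧ a < b) ∨ (b < a ∧ a ≤ δ)) → P.pref b a)
    (hx : x ∈ X) (hy : y ∈ X) (hxy : x < y) (hpxy : P.pref x y) : x < δ := by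
  by_contra h
  push_neg at h
  exact P.asymm x y hpxy (hsp x hx y hy (Or.inl ⟨h, hxy⟩))

lemma c3a {P : Pref X} {δ x y : ℝ}
    (hsp : ∀ a ∈ X, ∀ b ∈ X, ((δ ≤ a ∧ a < b) ∨ (b < a ∧ a ≤ δ)) → P.pref b a)
    (hxδ : x < δ) (hδy : δ ≤ y) (hx : x ∈ X) (hy : y ∈ X)
    (hpxy : P.pref x y) :
    ∀ v ∈ X, ¬ P.pref v y → (x < v ∧ v ≤ y) := by
  intro v hv hnp
  constructor
  · by_contra h
    push_neg at h
    rcases eq_or_lt_of_le h with rfl | hvx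
    · exact hnp hpxy
    · exact hnp (P.trans v x y (hsp x hx v hv (Or.inr ⟨hvx, hxδ.le⟩)) hpxy)
  · by_contra h
    push_neg at h
    exact hnp (hsp y hy v hv (Or.inl ⟨hδy, h⟩))

lemma c3b {P : Pref X} {δ y : ℝ}
    (hsp : ∀ a ∈ X, ∀ b ∈ X, ((δ ≤ a ∧ a < b) ∨ (b < a ∧ a ≤ δ)) → P.pref b a)
    (hδy : δ = y) (hy : y ∈ X) :
    ∀ v ∈ X, ¬ P.pref v y → v = y := by
  intro v hv hnp
  by_contra hne
  rcases lt_or_gt_of_ne hne with h | h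
  · exact hnp (hsp y hy v hv (Or.inr ⟨h, hδy.ge⟩))
  · exact hnp (hsp y hy v hv (Or.inl ⟨hδy.le, h⟩))

lemma c4 {P : Pref X} {δ y : ℝ}
    (hsp : ∀ a ∈ X, ∀ b ∈ X, ((δ ≤ a ∧ a < b) ∨ (b < a ∧ a ≤ δ)) → P.pref b a)
    (hyδ : y < δ) (hy : y ∈ X) :
    ∀ v ∈ X, ¬ P.pref v y → y ≤ v := by
  intro v hv hnp
  by_contra h
  push_neg at h
  exact hnp (hsp y hy v hv (Or.inr ⟨h, hyδ.le⟩))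

/-! ### The core argument (case `x < f R`) -/

lemma core (hSP : StrategyProof X A f) (hrange : SCRange X A f = X)
    (R : N → Pref X) (hR : Admissible X A R) (x : ℝ) (hx : x ∈ X)
    (hlt : x < f R) (hpref : ∀ i, (R i).pref x (f R)) : False := by
  classical
  set y := f R with hy_def
  have hyX : y ∈ X := outcome_mem hrange hR
  have hxy : x < y := hlt
  -- dipped data
  have hdip : ∀ i, i ∉ A → SingleDipped (R i) := fun i h => (hR i).2 h
  set δfun : N → ℝ := fun i => if h : i ∈ A then x + 1 else (hdip i h).choose
    with hδfun_def
  have hδ : ∀ i (h : i ∉ A), δfun i ∈ X ∧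
      ∀ a ∈ X, ∀ b ∈ X, ((δfun i ≤ a ∧ a < b) ∨ (b < a ∧ a ≤ δfun i)) →
        (R i).pref b a := by
    intro i h
    simp only [hδfun_def, dif_neg h]
    exact (hdip i h).choose_spec
  have hxδ : ∀ i (h : i ∉ A), x < δfun i :=
    fun i h => c2 (hδ i h).2 hx hyX hxy (hpref i)
  -- canonical profile at y
  set Pk : Pref X := mkPref X (uPk x y) with hPk_def
  set Rhat : N → Pref X := fun i =>
    if h : i ∈ A then Pk
    else if δfun i < y then mkPref X (uD1 x (δfun i) y)
    else if y < δfun i then mkPref X (uD2 y (δfun i))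
    else mkPref X (uDy x y) with hRhat_def
  have hRhatA : ∀ i, i ∈ A → Rhat i = Pk := by
    intro i h; simp only [hRhat_def]; rw [dif_pos h]
  have hRhatD1 : ∀ i, i ∉ A → δfun i < y → Rhat i = mkPref X (uD1 x (δfun i) y) := by
    intro i h h1; simp only [hRhat_def]; rw [dif_neg h, if_pos h1]
  have hRhatD2 : ∀ i, i ∉ A → y < δfun i → Rhat i = mkPref X (uD2 y (δfun i)) := by
    intro i h h1; simp only [hRhat_def]
    rw [dif_neg h, if_neg (by linarith), if_pos h1]
  have hRhatDy : ∀ i, i ∉ A → δfun i = y → Rhat i = mkPref X (uDy x y) := by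
    intro i h h1; simp only [hRhat_def]
    rw [dif_neg h, if_neg (by simp [h1]), if_neg (by simp [h1])]
  have hRhatAdm : Admissible X A Rhat := by
    intro i
    constructor
    · intro h; rw [hRhatA i h, hPk_def]; exact uPk_peaked hx hxy
    · intro h
      rcases lt_trichotomy (δfun i) y with h1 | h1 | h1
      · rw [hRhatD1 i h h1]; exact uD1_dipped (hδ i h).1 (hxδ i h) h1
      · rw [hRhatDy i h h1]; exact uDy_dipped hyX hxy
      · rw [hRhatD2 i h h1]; exact uD2_dipped (hδ i h).1 h1
  -- Px property of Rhat for dipped agents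
  have hPx : ∀ i, i ∉ A → ∀ v w, v ≤ x → x < w → (Rhat i).pref v w := by
    intro i h v w hv hw
    rcases lt_trichotomy (δfun i) y with h1 | h1 | h1
    · rw [hRhatD1 i h h1]; exact uD1_Px (hxδ i h) h1 hv hw
    · rw [hRhatDy i h h1]; exact uDy_Px hxy hv hw
    · rw [hRhatD2 i h h1]; exact uD2_Px hxy h1 hv hw
  -- monotone replacement at y
  have hfRhat : f Rhat = y := by
    apply mono_many hSP hrange hR Rhat hRhatAdm
    intro i v hv hnp
    rw [← hy_def] at hnp ⊢
    by_cases hiA : i ∈ A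
    · rw [hRhatA i hiA, hPk_def]
      exact uPk_C hxy (c1 ((hR i).1 hiA) hx hyX hxy (hpref i) v hv hnp)
    · rcases lt_trichotomy (δfun i) y with h1 | h1 | h1
      · rw [hRhatD1 i hiA h1]
        have h2 := c3a (hδ i hiA).2 (hxδ i hiA) h1.le hx hyX (hpref i) v hv hnp
        exact uD1_Cy (hxδ i hiA) h1 h2.1 h2.2
      · rw [hRhatDy i hiA h1]
        have h2 := c3b (hδ i hiA).2 h1 hyX v hv hnp
        rw [h2]; exact not_pref_self _ _
      · rw [hRhatD2 i hiA h1]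
        exact uD2_Cy h1 (c4 (hδ i hiA).2 h1 hyX v hv hnp)
  -- a profile achieving x
  have hxr : x ∈ SCRange X A f := by rw [hrange]; exact hx
  obtain ⟨Rs, hRs, hfRs⟩ := hxr
  -- replace the peaked agents of Rs by Pk : outcome stays x
  set Hp : N → Pref X := fun i => if i ∈ A then Pk else Rs i with hHp_def
  have hHpAdm : Admissible X A Hp := by
    intro i
    constructor
    · intro h; simp only [hHp_def]; rw [if_pos h, hPk_def]
      exact uPk_peaked hx hxy
    · intro h; simp only [hHp_def]; rw [if_neg h]; exact (hRs i).2 h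
  have hfHp : f Hp = x := by
    rw [← hfRs]
    apply mono_many hSP hrange hRs Hp hHpAdm
    intro i v hv hnp
    by_cases hiA : i ∈ A
    · simp only [hHp_def]; rw [if_pos hiA, hPk_def, hfRs]
      exact uPk_nbest hxy
    · simp only [hHp_def]; rw [if_neg hiA]; exact hnp
  -- the chain over dipped agents
  set prof : Finset N → (N → Pref X) := fun s i =>
    if i ∈ A then Pk else if i ∈ s then Rs i else Rhat i with hprof_def
  have hprofAdm : ∀ s, Admissible X A (prof s) := by
    intro s i
    constructor
    · intro h; simp only [hprof_def]; rw [if_pos h, hPk_def]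
      exact uPk_peaked hx hxy
    · intro h; simp only [hprof_def]; rw [if_neg h]
      by_cases hs : i ∈ s
      · rw [if_pos hs]; exact (hRs i).2 h
      · rw [if_neg hs]; exact (hRhatAdm i).2 h
  have key : ∀ s : Finset N, x < f (prof s) := by
    intro s
    induction s using Finset.induction_on with
    | empty =>
      have e : prof ∅ = Rhat := by
        funext j
        simp only [hprof_def]
        by_cases hj : j ∈ A
        · rw [if_pos hj, hRhatA j hj]
        · simp [hj]
      rw [e, hfRhat]; exact hxy
    | @insert i s hi ih =>
      by_cases hiA : i ∈ A
      · have e : prof (insert i s) = prof s := by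
          funext j
          by_cases hj : j = i
          · subst hj; simp only [hprof_def]; rw [if_pos hiA, if_pos hiA]
          · simp only [hprof_def, Finset.mem_insert, hj, false_or]
        rw [e]; exact ih
      · have e : prof (insert i s) = Function.update (prof s) i (Rs i) := by
          funext j
          by_cases hj : j = i
          · subst hj
            simp only [hprof_def, Function.update_self]
            rw [if_neg hiA, if_pos (Finset.mem_insert_self j s)]
          · rw [Function.update_of_ne hj]
            simp only [hprof_def, Finset.mem_insert, hj, false_or]
        have hadm' : Admissible X A (Function.update (prof s) i (Rs i)) := by
          rw [← e]; exact hprofAdm _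
        have hsp := hSP (prof s) (hprofAdm s) i (Rs i) hadm'
        rw [← e] at hsp
        have hpi : prof s i = Rhat i := by
          simp only [hprof_def]; rw [if_neg hiA, if_neg hi]
        by_contra hle
        push_neg at hle
        exact hsp (by rw [hpi]; exact hPx i hiA _ _ hle ih)
  have hfin := key Finset.univ
  have e : prof Finset.univ = Hp := by
    funext j
    simp only [hprof_def, hHp_def, Finset.mem_univ, if_true]
  rw [e, hfHp] at hfin
  exact lt_irrefl x hfin

end Core

/-! ### Mirror transport (to handle the case `f R < x`) -/

def negSet (X : Set ℝ) : Set ℝ := {a : ℝ | -a ∈ X}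

def negPref {X : Set ℝ} (P : Pref X) : Pref (negSet X) where
  pref a b := P.pref (-a) (-b)
  asymm := fun a b h => P.asymm (-a) (-b) h
  trans := fun a b c h1 h2 => P.trans (-a) (-b) (-c) h1 h2
  total := fun a ha b hb hne =>
    P.total (-a) ha (-b) hb (fun h => hne (neg_injective h))

def negPref' {X : Set ℝ} (Q : Pref (negSet X)) : Pref X where
  pref a b := Q.pref (-a) (-b)
  asymm := fun a b h => Q.asymm (-a) (-b) h
  trans := fun a b c h1 h2 => Q.trans (-a) (-b) (-c) h1 h2
  total := fun a ha b hb hne =>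
    Q.total (-a) (show -(-a) ∈ X by rwa [neg_neg]) (-b)
      (show -(-b) ∈ X by rwa [neg_neg]) (fun h => hne (neg_injective h))

lemma negPref'_negPref {X : Set ℝ} (P : Pref X) : negPref' (negPref P) = P := by
  apply prefExt
  funext a b
  show P.pref (- -a) (- -b) = P.pref a b
  rw [neg_neg, neg_neg]

lemma negPref_peaked {X : Set ℝ} {P : Pref X} (h : SinglePeaked P) :
    SinglePeaked (negPref P) := by
  obtain ⟨ρ, hρ, hp⟩ := h
  refine ⟨-ρ, show -(-ρ) ∈ X by rwa [neg_neg], ?_⟩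
  intro a ha b hb hcond
  apply hp (-a) ha (-b) hb
  rcases hcond with ⟨h1, h2⟩ | ⟨h1, h2⟩
  · exact Or.inr ⟨by linarith, by linarith⟩
  · exact Or.inl ⟨by linarith, by linarith⟩

lemma negPref_dipped {X : Set ℝ} {P : Pref X} (h : SingleDipped P) :
    SingleDipped (negPref P) := by
  obtain ⟨δ, hδ, hd⟩ := h
  refine ⟨-δ, show -(-δ) ∈ X by rwa [neg_neg], ?_⟩
  intro a ha b hb hcond
  apply hd (-a) ha (-b) hb
  rcases hcond with ⟨h1, h2⟩ | ⟨h1, h2⟩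
  · exact Or.inr ⟨by linarith, by linarith⟩
  · exact Or.inl ⟨by linarith, by linarith⟩

lemma negPref'_peaked {X : Set ℝ} {Q : Pref (negSet X)} (h : SinglePeaked Q) :
    SinglePeaked (negPref' Q) := by
  obtain ⟨ρ, hρ, hp⟩ := h
  refine ⟨-ρ, hρ, ?_⟩
  intro a ha b hb hcond
  apply hp (-a) (show -(-a) ∈ X by rwa [neg_neg]) (-b) (show -(-b) ∈ X by rwa [neg_neg])
  rcases hcond with ⟨h1, h2⟩ | ⟨h1, h2⟩
  · exact Or.inr ⟨by linarith, by linarith⟩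
  · exact Or.inl ⟨by linarith, by linarith⟩

lemma negPref'_dipped {X : Set ℝ} {Q : Pref (negSet X)} (h : SingleDipped Q) :
    SingleDipped (negPref' Q) := by
  obtain ⟨δ, hδ, hd⟩ := h
  refine ⟨-δ, hδ, ?_⟩
  intro a ha b hb hcond
  apply hd (-a) (show -(-a) ∈ X by rwa [neg_neg]) (-b) (show -(-b) ∈ X by rwa [neg_neg])
  rcases hcond with ⟨h1, h2⟩ | ⟨h1, h2⟩
  · exact Or.inr ⟨by linarith, by linarith⟩
  · exact Or.inl ⟨by linarith, by linarith⟩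

section Mirror

variable {N : Type} [Fintype N] [DecidableEq N]
variable {X : Set ℝ} {A : Set N} {f : (N → Pref X) → ℝ}

/-- The mirrored social choice rule. -/
def negf (f : (N → Pref X) → ℝ) : (N → Pref (negSet X)) → ℝ :=
  fun R' => - f (fun i => negPref' (R' i))

lemma negAdm' {R' : N → Pref (negSet X)} (hR' : Admissible (negSet X) A R') :
    Admissible X A (fun i => negPref' (R' i)) := fun i =>
  ⟨fun h => negPref'_peaked ((hR' i).1 h), fun h => negPref'_dipped ((hR' i).2 h)⟩

lemma negAdm {R : N → Pref X} (hR : Admissible X A R) :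
    Admissible (negSet X) A (fun i => negPref (R i)) := fun i =>
  ⟨fun h => negPref_peaked ((hR i).1 h), fun h => negPref_dipped ((hR i).2 h)⟩

lemma negSP (hSP : StrategyProof X A f) : StrategyProof (negSet X) A (negf f) := by
  intro R' hR' i P' hupd hcon
  have key : (fun j => negPref' (Function.update R' i P' j))
      = Function.update (fun j => negPref' (R' j)) i (negPref' P') := by
    funext j
    by_cases hj : j = i
    · subst hj; simp
    · simp [Function.update_of_ne hj]
  have hS : Admissible X A (fun j => negPref' (R' j)) := negAdm' hR'
  have hupd' : Admissible X A
      (Function.update (fun j => negPref' (R' j)) i (negPref' P')) := by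
    rw [← key]; exact negAdm' hupd
  apply hSP _ hS i (negPref' P') hupd'
  simp only [negf] at hcon
  rw [key] at hcon
  exact hcon

lemma negRange (hrange : SCRange X A f = X) :
    SCRange (negSet X) A (negf f) = negSet X := by
  ext z
  constructor
  · rintro ⟨R', hR', rfl⟩
    show -(negf f R') ∈ X
    simp only [negf, neg_neg]
    exact outcome_mem hrange (negAdm' hR')
  · intro hz
    have hz' : -z ∈ X := hz
    rw [← hrange] at hz'
    obtain ⟨R, hRa, hfR⟩ := hz'
    refine ⟨fun i => negPref (R i), negAdm hRa, ?_⟩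
    simp only [negf]
    have e : (fun i => negPref' (negPref (R i))) = R :=
      funext fun i => negPref'_negPref (R i)
    rw [e, hfR, neg_neg]

end Mirror
/-- Proposition 5(i): strategy-proof rules with full range are
Pareto efficient. -/
theorem stmt15 {N : Type} [Fintype N] [DecidableEq N] [Nonempty N]
    (X : Set ℝ) (hX : X.Countable)
    (A : Set N) (f : (N → Pref X) → ℝ) (hSP : StrategyProof X A f)
    (hrange : SCRange X A f = X) :
    ¬ ∃ R, Admissible X A R ∧ ∃ x ∈ X, ∀ i, (R i).pref x (f R) := by
  rintro ⟨R, hR, x, hx, hpref⟩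
  have hne : x ≠ f R := by
    intro h
    have hp := hpref (Classical.arbitrary N)
    rw [← h] at hp
    exact not_pref_self _ _ hp
  rcases hne.lt_or_gt with hlt | hgt
  · exact core hSP hrange R hR x hx hlt hpref
  · have hSP' : StrategyProof (negSet X) A (negf f) := negSP hSP
    have hrg : SCRange (negSet X) A (negf f) = negSet X := negRange hrange
    have hadm' : Admissible (negSet X) A (fun i => negPref (R i)) := negAdm hR
    have hval : negf f (fun i => negPref (R i)) = - f R := by
      simp only [negf]
      have e : (fun i => negPref' (negPref (R i))) = R :=
        funext fun i => negPref'_negPref (R i)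
      rw [e]
    apply core hSP' hrg (fun i => negPref (R i)) hadm' (-x)
      (show -(-x) ∈ X by rwa [neg_neg]) ?_ ?_
    · rw [hval]; linarith
    · intro i
      rw [hval]
      show (R i).pref (- -x) (- - f R)
      rw [neg_neg, neg_neg]
      exact hpref i
end
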